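/- Let k ≥ 2, 1 ≤ r < k-1, p ≥ 1, with 2p+1 = diam(K(2k+r,k)) and r not dividing k-1. If A and B are k-subsets of [2k+r] that are not adjacent in K_{=2p+1}(2k+r,k), then their distance in K_{=2p+1}(2k+r,k) equals 2. -/

import Mathlib

/-!
Along an edge `X ~ Z` of `K(2k+r,k)` the complement of `X ∪ Z` has `r` points, so for any
vertex `Y` we have `k - r ≤ |X ∩ Y| + |Z ∩ Y| ≤ k`. By induction, a walk of length `2m` from `X`
to `Y` forces `k ≤ |X ∩ Y| + mr` and one of length `2m + 1` forces `|X ∩ Y| ≤ mr`; conversely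
two steps can move `|X ∩ Y|` by `r` in either direction, so these bounds are attained.

Consequently, if the diameter is `2p + 1`, then `X` and `Y` are at distance exactly `2p + 1` as
soon as `(p - 1)r < |X ∩ Y| < k - pr`, and a pair realising the diameter shows that this window
has room: `2pr + 2 ≤ k + r`. Two distinct non-adjacent vertices `A`, `B` then have a common
neighbour `C` in the exact-distance graph, found by choosing how many points `C` takes from each
Venn region of `A` and `B` so that `|C ∩ A| = |C ∩ B|` lies in the window.
-/


/-- The Kneser graph: vertices are the `k`-subsets of `[n]`, adjacency is disjointness. -/
def kneserGraph (n k : ℕ) : SimpleGraph {A : Finset (Fin n) // A.card = k} where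
  Adj A B := A ≠ B ∧ Disjoint A.1 B.1
  symm := ⟨fun A B h => ⟨h.1.symm, h.2.symm⟩⟩
  loopless := ⟨fun A h => h.1 rfl⟩

/-- The exact distance-`d` graph of a graph `G`. -/
def exactDistanceGraph {V : Type*} (G : SimpleGraph V) (d : ℕ) : SimpleGraph V where
  Adj A B := A ≠ B ∧ G.dist A B = d
  symm := ⟨fun A B h => ⟨h.1.symm, by rw [SimpleGraph.dist_comm]; exact h.2⟩⟩
  loopless := ⟨fun A h => h.1 rfl⟩

open Finset SimpleGraph

section Venn

variable {α : Type*} [DecidableEq α]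

lemma card_inter_add_card_inter_le_of_disjoint {X Z : Finset α} (h : Disjoint X Z)
    (Y : Finset α) : #(X ∩ Y) + #(Z ∩ Y) ≤ #Y := by
  rw [← card_union_of_disjoint (h.mono inter_subset_left inter_subset_left),
    ← union_inter_distrib_right]
  exact card_le_card inter_subset_right

lemma exists_subset_card_eq_card_inter_eq {S U : Finset α} {a b : ℕ} (ha : a ≤ #(S ∩ U))
    (hb : b ≤ #(S \ U)) : ∃ T ⊆ S, #T = a + b ∧ #(T ∩ U) = a := by
  obtain ⟨P, hP, rfl⟩ := exists_subset_card_eq ha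
  obtain ⟨Q, hQ, rfl⟩ := exists_subset_card_eq hb
  have hQU : Disjoint Q U := disjoint_of_subset_left hQ sdiff_disjoint
  refine ⟨P ∪ Q, union_subset (hP.trans inter_subset_left) (hQ.trans sdiff_subset),
    card_union_of_disjoint ?_, ?_⟩
  · exact disjoint_of_subset_left hP (disjoint_of_subset_right hQ (disjoint_sdiff_inter S U).symm)
  · rw [union_inter_distrib_right, inter_eq_left.2 (hP.trans inter_subset_right),
      disjoint_iff_inter_eq_empty.1 hQU, union_empty]

variable [Fintype α]

lemma card_le_card_inter_add_card_inter_add_card_compl (X Z Y : Finset α) :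
    #Y ≤ #(X ∩ Y) + #(Z ∩ Y) + #(X ∪ Z)ᶜ := by
  calc #Y ≤ #((X ∩ Y) ∪ (Z ∩ Y) ∪ (X ∪ Z)ᶜ) := card_le_card fun a ha => by simp [ha]; tauto
    _ ≤ #((X ∩ Y) ∪ (Z ∩ Y)) + #(X ∪ Z)ᶜ := card_union_le _ _
    _ ≤ #(X ∩ Y) + #(Z ∩ Y) + #(X ∪ Z)ᶜ := by gcongr; exact card_union_le _ _

lemma exists_card_inter_eq_card_inter_eq {A B : Finset α} {x y z w : ℕ} (hx : x ≤ #(A ∩ B))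
    (hy : y ≤ #(A \ B)) (hz : z ≤ #(B \ A)) (hw : w ≤ #(A ∪ B)ᶜ) :
    ∃ C : Finset α, #C = x + y + z + w ∧ #(C ∩ A) = x + y ∧ #(C ∩ B) = x + z := by
  obtain ⟨T₁, hT₁A, hT₁, hT₁B⟩ := exists_subset_card_eq_card_inter_eq hx hy
  obtain ⟨T₂, hT₂A, hT₂, hT₂B⟩ := exists_subset_card_eq_card_inter_eq (S := Aᶜ) (U := B)
    (a := z) (b := w) (by rwa [inter_comm, ← sdiff_eq_inter_compl])
    (by rwa [sdiff_eq_inter_compl, ← compl_union])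
  have hT₂A' : Disjoint T₂ A := disjoint_of_subset_left hT₂A disjoint_compl_left
  have hT : Disjoint T₁ T₂ := disjoint_of_subset_left hT₁A hT₂A'.symm
  refine ⟨T₁ ∪ T₂, by rw [card_union_of_disjoint hT]; omega, ?_, ?_⟩
  · rw [union_inter_distrib_right, inter_eq_left.2 hT₁A,
      disjoint_iff_inter_eq_empty.1 hT₂A', union_empty, hT₁]
  · rw [union_inter_distrib_right, card_union_of_disjoint
      (hT.mono inter_subset_left inter_subset_left), hT₁B, hT₂B]

end Venn

namespace kneserGraph

variable {k r : ℕ}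

local notation "𝒱" => {A : Finset (Fin (2 * k + r)) // Finset.card A = k}

lemma card_inter_le (X Y : 𝒱) : #(X.1 ∩ Y.1) ≤ k :=
  (card_le_card inter_subset_left).trans_eq X.2

lemma card_sdiff (X Y : 𝒱) : #(X.1 \ Y.1) = k - #(X.1 ∩ Y.1) := by
  have := card_sdiff_add_card_inter X.1 Y.1
  omega

lemma card_compl_union (X Y : 𝒱) : #(X.1 ∪ Y.1)ᶜ = r + #(X.1 ∩ Y.1) := by
  have := card_union_add_card_inter X.1 Y.1
  have := card_inter_le X Y
  rw [card_compl, Fintype.card_fin]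
  omega

lemma eq_of_le_card_inter {X Y : 𝒱} (h : k ≤ #(X.1 ∩ Y.1)) : X = Y := by
  have hXY : X.1 ⊆ Y.1 := inter_eq_left.1 <|
    eq_of_subset_of_card_le inter_subset_left (X.2.trans_le h)
  exact Subtype.ext (eq_of_subset_of_card_le hXY (by rw [X.2, Y.2]))

lemma pos_of_ne {X Y : 𝒱} (h : X ≠ Y) : 0 < k :=
  Nat.pos_of_ne_zero fun hk => h (eq_of_le_card_inter (by omega))

lemma adj_of_disjoint (hk : 0 < k) {X Y : 𝒱} (h : Disjoint X.1 Y.1) :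
    (kneserGraph (2 * k + r) k).Adj X Y := by
  refine ⟨fun hXY => ?_, h⟩
  rw [hXY, disjoint_self_iff_empty, ← card_eq_zero, Y.2] at h
  omega

lemma card_inter_add_card_inter_bounds {X Z : 𝒱} (h : (kneserGraph (2 * k + r) k).Adj X Z)
    (Y : 𝒱) : #(X.1 ∩ Y.1) + #(Z.1 ∩ Y.1) ≤ k ∧ k ≤ #(X.1 ∩ Y.1) + #(Z.1 ∩ Y.1) + r := by
  have hcompl : #(X.1 ∪ Z.1)ᶜ = r := by
    rw [card_compl_union, disjoint_iff_inter_eq_empty.1 h.2, card_empty, add_zero]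
  have hle := card_inter_add_card_inter_le_of_disjoint h.2 Y.1
  have hge := card_le_card_inter_add_card_inter_add_card_compl X.1 Z.1 Y.1
  rw [Y.2] at hle hge
  omega

lemma card_inter_bounds_of_walk {X Y : 𝒱} (W : (kneserGraph (2 * k + r) k).Walk X Y) (m : ℕ) :
    (W.length = 2 * m → k ≤ #(X.1 ∩ Y.1) + m * r) ∧
      (W.length = 2 * m + 1 → #(X.1 ∩ Y.1) ≤ m * r) := by
  induction W generalizing m with
  | @nil U => exact ⟨fun _ => by rw [inter_self, U.2]; omega, fun h => by simp at h⟩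
  | @cons X Z Y h W ih =>
    have hXZ := card_inter_add_card_inter_bounds h Y
    rw [Walk.length_cons]
    refine ⟨fun hW => ?_, fun hW => ?_⟩
    · obtain ⟨m, rfl⟩ : ∃ m', m = m' + 1 := ⟨m - 1, by omega⟩
      have := (ih m).2 (by omega)
      rw [add_mul]
      omega
    · have := (ih m).1 (by omega)
      omega

lemma exists_card_inter_eq_card_inter_eq (A B : 𝒱) {x y z w : ℕ} (hx : x ≤ #(A.1 ∩ B.1))
    (hy : y + #(A.1 ∩ B.1) ≤ k) (hz : z + #(A.1 ∩ B.1) ≤ k) (hw : w ≤ r + #(A.1 ∩ B.1))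
    (hsum : x + y + z + w = k) :
    ∃ C : 𝒱, #(C.1 ∩ A.1) = x + y ∧ #(C.1 ∩ B.1) = x + z := by
  have hAB := card_sdiff A B
  have hBA := card_sdiff B A
  rw [inter_comm B.1] at hBA
  obtain ⟨C, hC, hCA, hCB⟩ := _root_.exists_card_inter_eq_card_inter_eq hx (y := y) (z := z)
    (by omega) (by omega) (card_compl_union A B ▸ hw)
  exact ⟨⟨C, hC.trans hsum⟩, hCA, hCB⟩

lemma exists_walk_length_two (hk : 0 < k) {X X' : 𝒱} (h : k ≤ #(X.1 ∩ X'.1) + r) :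
    ∃ W : (kneserGraph (2 * k + r) k).Walk X X', W.length = 2 := by
  have hcompl : k ≤ #(X.1 ∪ X'.1)ᶜ := by
    rw [card_compl_union]
    omega
  obtain ⟨Z, hZ, hZk⟩ := exists_subset_card_eq hcompl
  have hZ' : Disjoint Z (X.1 ∪ X'.1) := subset_compl_iff_disjoint_right.1 hZ
  rw [disjoint_union_right] at hZ'
  exact ⟨.cons (adj_of_disjoint hk (Y := ⟨Z, hZk⟩) hZ'.1.symm)
    (.cons (adj_of_disjoint hk hZ'.2) .nil), rfl⟩

lemma exists_walk_length_two_card_inter_eq_min_add (hk : 0 < k) (X Y : 𝒱) :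
    ∃ X' : 𝒱, (∃ W : (kneserGraph (2 * k + r) k).Walk X X', W.length = 2) ∧
      #(X'.1 ∩ Y.1) = min k (#(X.1 ∩ Y.1) + r) := by
  have := card_inter_le X Y
  obtain ⟨X', hX'X, hX'Y⟩ := exists_card_inter_eq_card_inter_eq X Y
    (x := #(X.1 ∩ Y.1)) (y := k - #(X.1 ∩ Y.1) - min r (k - #(X.1 ∩ Y.1)))
    (z := min r (k - #(X.1 ∩ Y.1))) (w := 0) le_rfl (by omega) (by omega) (by omega) (by omega)
  exact ⟨X', exists_walk_length_two hk (by rw [inter_comm]; omega), by omega⟩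

lemma exists_walk_length_two_card_inter_eq_sub (hk : 0 < k) (X Y : 𝒱) :
    ∃ X' : 𝒱, (∃ W : (kneserGraph (2 * k + r) k).Walk X X', W.length = 2) ∧
      #(X'.1 ∩ Y.1) = #(X.1 ∩ Y.1) - r := by
  have := card_inter_le X Y
  obtain ⟨X', hX'X, hX'Y⟩ := exists_card_inter_eq_card_inter_eq X Y
    (x := #(X.1 ∩ Y.1) - r) (y := k - #(X.1 ∩ Y.1)) (z := 0) (w := min r #(X.1 ∩ Y.1))
    (by omega) (by omega) (by omega) (by omega) (by omega)
  exact ⟨X', exists_walk_length_two hk (by rw [inter_comm]; omega), by omega⟩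

lemma exists_walk_length_eq_two_mul (hk : 0 < k) (m : ℕ) {X Y : 𝒱}
    (h : k ≤ #(X.1 ∩ Y.1) + m * r) :
    ∃ W : (kneserGraph (2 * k + r) k).Walk X Y, W.length = 2 * m := by
  induction m generalizing X with
  | zero =>
    obtain rfl := eq_of_le_card_inter (by simpa using h)
    exact ⟨.nil, rfl⟩
  | succ m ih =>
    obtain ⟨X', ⟨W, hW⟩, hX'⟩ := exists_walk_length_two_card_inter_eq_min_add hk X Y
    obtain ⟨W', hW'⟩ := ih (X := X') (by rw [hX']; rw [add_mul] at h; omega)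
    exact ⟨W.append W', by rw [Walk.length_append]; omega⟩

lemma exists_walk_length_eq_two_mul_add_one (hk : 0 < k) (m : ℕ) {X Y : 𝒱}
    (h : #(X.1 ∩ Y.1) ≤ m * r) :
    ∃ W : (kneserGraph (2 * k + r) k).Walk X Y, W.length = 2 * m + 1 := by
  induction m generalizing X with
  | zero =>
    have hXY : Disjoint X.1 Y.1 :=
      disjoint_iff_inter_eq_empty.2 (card_eq_zero.1 (by simpa using h))
    exact ⟨.cons (adj_of_disjoint hk hXY) .nil, rfl⟩
  | succ m ih =>
    obtain ⟨X', ⟨W, hW⟩, hX'⟩ := exists_walk_length_two_card_inter_eq_sub hk X Y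
    obtain ⟨W', hW'⟩ := ih (X := X') (by rw [hX']; rw [add_mul] at h; omega)
    exact ⟨W.append W', by rw [Walk.length_append]; omega⟩

lemma two_mul_add_two_le_of_diam_eq (hr : 0 < r) {p : ℕ}
    (hdiam : (kneserGraph (2 * k + r) k).diam = 2 * p + 1) : 2 * (p * r) + 2 ≤ k + r := by
  have : Nontrivial 𝒱 := nontrivial_of_diam_ne_zero (G := kneserGraph (2 * k + r) k) (by omega)
  obtain ⟨X, Y, hXY⟩ := exists_dist_eq_diam (G := kneserGraph (2 * k + r) k)
  rw [hdiam] at hXY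
  have hk : 0 < k := pos_of_ne (X := X) (Y := Y) (by rintro rfl; simp at hXY)
  have hfar : #(X.1 ∩ Y.1) + p * r < k := by
    by_contra! h
    obtain ⟨W, hW⟩ := exists_walk_length_eq_two_mul hk p h
    have := dist_le W
    omega
  rcases Nat.eq_zero_or_pos p with rfl | hp
  · omega
  have hnear : (p - 1) * r < #(X.1 ∩ Y.1) := by
    by_contra! h
    obtain ⟨W, hW⟩ := exists_walk_length_eq_two_mul_add_one hk (p - 1) h
    have := dist_le W
    omega
  have : p * r ≤ (p - 1) * r + r := by
    rw [← Nat.succ_mul]; exact Nat.mul_le_mul_right r (by omega)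
  omega

lemma exactDistanceGraph_adj_of_card_inter {p : ℕ}
    (hdiam : (kneserGraph (2 * k + r) k).diam = 2 * p + 1) {X Y : 𝒱}
    (h₁ : p * r < #(X.1 ∩ Y.1) + r) (h₂ : #(X.1 ∩ Y.1) + p * r < k) :
    (exactDistanceGraph (kneserGraph (2 * k + r) k) (2 * p + 1)).Adj X Y := by
  have hne : X ≠ Y := by
    rintro rfl
    rw [inter_self, X.2] at h₂
    omega
  have hediam := ediam_ne_top_of_diam_ne_zero (G := kneserGraph (2 * k + r) k) (by omega)
  obtain ⟨W, hW⟩ := (preconnected_of_ediam_ne_top hediam X Y).exists_walk_length_eq_dist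
  have hle : (kneserGraph (2 * k + r) k).dist X Y ≤ 2 * p + 1 := hdiam ▸ dist_le_diam hediam
  refine ⟨hne, ?_⟩
  obtain ⟨m, hm | hm⟩ := Nat.even_or_odd' ((kneserGraph (2 * k + r) k).dist X Y)
  · have := (card_inter_bounds_of_walk W m).1 (hW.trans hm)
    have : p < m := lt_of_not_ge fun hmp => by
      have := Nat.mul_le_mul_right r hmp
      omega
    omega
  · have := (card_inter_bounds_of_walk W m).2 (hW.trans hm)
    have : p ≤ m := le_of_not_gt fun hmp => by
      have := Nat.mul_le_mul_right r (Nat.succ_le_of_lt hmp)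
      rw [Nat.succ_mul] at this
      omega
    omega

end kneserGraph

/-- Sizes `x = #(C ∩ A ∩ B)` and `y = #(C ∩ (A \ B)) = #(C ∩ (B \ A))` of a common neighbour `C`
of two `k`-sets `A`, `B` with `#(A ∩ B) = s`. -/
lemma exists_common_neighbor_counts {k r p s : ℕ} (hr : 0 < r) (hkr : 2 * (p * r) + 2 ≤ k + r)
    (hs : s < k) :
    ∃ x y, x ≤ s ∧ y + s ≤ k ∧ x + 2 * y ≤ k ∧ k ≤ x + 2 * y + (r + s) ∧
      p * r < x + y + r ∧ x + y + p * r < k := by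
  have hpr : p * r = 0 ∨ r ≤ p * r :=
    p.eq_zero_or_pos.imp (fun hp => by rw [hp, zero_mul]) (Nat.le_mul_of_pos_left r)
  by_cases hfar : s + p * r < k
  · exact ⟨0, max (p * r + 1 - r) ((k - r - s + 1) / 2), by omega⟩
  · exact ⟨s - (p * r + 1), k - (p * r + 1) - (s - (p * r + 1)), by omega⟩

open kneserGraph in
theorem stmt15_general (k r p : ℕ) (hr : 1 ≤ r)
    (hdiam : 2 * p + 1 = (kneserGraph (2 * k + r) k).diam)
    (A B : {A : Finset (Fin (2 * k + r)) // A.card = k}) (hAB : A ≠ B)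
    (hnadj : ¬ (exactDistanceGraph (kneserGraph (2 * k + r) k) (2 * p + 1)).Adj A B) :
    (exactDistanceGraph (kneserGraph (2 * k + r) k) (2 * p + 1)).dist A B = 2 := by
  have hs : #(A.1 ∩ B.1) < k :=
    (card_inter_le A B).lt_of_ne fun h => hAB (eq_of_le_card_inter h.ge)
  obtain ⟨x, y, hx, hy, hxy, hk, h₁, h₂⟩ :=
    exists_common_neighbor_counts hr (two_mul_add_two_le_of_diam_eq hr hdiam.symm) hs
  obtain ⟨C, hCA, hCB⟩ := exists_card_inter_eq_card_inter_eq A B (z := y) (w := k - (x + 2 * y))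
    hx hy hy (by omega) (by omega)
  have hAC := exactDistanceGraph_adj_of_card_inter hdiam.symm (X := C) (Y := A) (by omega)
    (by omega)
  have hBC := exactDistanceGraph_adj_of_card_inter hdiam.symm (X := C) (Y := B) (by omega)
    (by omega)
  have hC : C ∈ (exactDistanceGraph (kneserGraph (2 * k + r) k) (2 * p + 1)).commonNeighbors A B :=
    (mem_commonNeighbors _).2 ⟨hAC.symm, hBC.symm⟩
  rw [SimpleGraph.dist, edist_eq_two_iff.2 ⟨hAB, hnadj, C, hC⟩]
  rfl

theorem stmt15 (k r p : ℕ) (hk : 2 ≤ k) (hr : 1 ≤ r) (hrk : r < k - 1) (hp : 1 ≤ p)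
    (hdiam : 2 * p + 1 = (kneserGraph (2 * k + r) k).diam) (hnd : ¬ r ∣ (k - 1))
    (A B : {A : Finset (Fin (2 * k + r)) // A.card = k}) (hAB : A ≠ B)
    (hnadj : ¬ (exactDistanceGraph (kneserGraph (2 * k + r) k) (2 * p + 1)).Adj A B) :
    (exactDistanceGraph (kneserGraph (2 * k + r) k) (2 * p + 1)).dist A B = 2 :=
  stmt15_general k r p hr hdiam A B hAB hnadj
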